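/- arXiv:1304.6326 — 3 statements merged into one kernel-verified Lean document; each statement's English description precedes it below -/
import Mathlib

section
/- The infimum over p>0 of (1/Γ(p)) ∫₀^p u^{p-1} e^{-u} du is strictly positive and strictly less than 1. -/
/-!
Write `w u = u ^ (p - 1) * e^(-u)` and `γ = ∫₀^p w`. For `p ≤ 1`, `p Γ(p) = Γ(p + 1) ≤ 1` and
`w u ≥ u ^ (p - 1) * e^(-p)` on `(0, p)` give `γ / Γ(p) ≥ p ^ p * e^(-p) ≥ e^(-1)`.

For `p ≥ 1`, integrating `(u ^ p * e^(-u))' = (p - u) w` gives `∫₀^p (p - u) w = p ^ p * e^(-p)`,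
while `∫₀^∞ (p - u) ^ 2 w = p Γ(p)` is the variance of the Gamma law. The pointwise bound
`p - u ≤ c + (p - u) ^ 2 / (4 c)` with `c = e² √p / 2` and the Stirling-type bound
`Γ(p) ≤ e² p ^ (p - 1/2) e^(-p)` then yield `γ ≥ e^(-4) Γ(p)`. The Stirling-type bound holds on
`[1, 2]` since `Γ ≤ 1` there, and propagates along `p ↦ p + 1` because
`1 ≤ (q + 1/2) log (1 + 1/q)`, the first term of the series of the logarithm.

The value at `p = 1` is `1 - e^(-1) < 1`.
-/

open MeasureTheory Set

theorem MeasureTheory.integral_mul_le_amgm {α : Type*} [MeasurableSpace α] {μ : Measure α}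
    {f g : α → ℝ} {c : ℝ} (hc : 0 < c) (hf : 0 ≤ᵐ[μ] f) (hf_int : Integrable f μ)
    (hgf : Integrable (fun x => g x * f x) μ) (hg2f : Integrable (fun x => g x ^ 2 * f x) μ) :
    ∫ x, g x * f x ∂μ ≤ c * ∫ x, f x ∂μ + (4 * c)⁻¹ * ∫ x, g x ^ 2 * f x ∂μ := by
  rw [← integral_const_mul, ← integral_const_mul,
    ← integral_add (hf_int.const_mul _) (hg2f.const_mul _)]
  refine integral_mono_ae hgf ((hf_int.const_mul _).add (hg2f.const_mul _)) ?_
  filter_upwards [hf] with x hx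
  have hpoint : g x ≤ c + (4 * c)⁻¹ * g x ^ 2 := by
    have : 0 ≤ (4 * c)⁻¹ * (g x - 2 * c) ^ 2 := by positivity
    field_simp at this ⊢
    nlinarith
  have := mul_le_mul_of_nonneg_right hpoint hx
  linarith

namespace Real

theorem two_div_two_mul_add_one_le_log_one_add_inv {a : ℝ} (ha : 0 < a) :
    2 / (2 * a + 1) ≤ log (1 + a⁻¹) := by
  have h := le_hasSum (hasSum_log_one_add_inv ha) 0 fun k _ => by positivity
  simpa [div_eq_mul_inv] using h

theorem mul_rpow_sub_half_mul_exp_neg_le {q : ℝ} (hq : 0 < q) :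
    q * (q ^ (q - 1 / 2) * exp (-q)) ≤ (q + 1) ^ (q + 1 - 1 / 2) * exp (-(q + 1)) := by
  have hlog : 1 ≤ (q + 1 / 2) * (log (q + 1) - log q) := by
    have h := two_div_two_mul_add_one_le_log_one_add_inv hq
    rw [show 1 + q⁻¹ = (q + 1) / q by field_simp, log_div (by positivity) hq.ne'] at h
    calc (1 : ℝ) = (q + 1 / 2) * (2 / (2 * q + 1)) := by field_simp
      _ ≤ _ := by gcongr
  nth_rewrite 1 [← exp_log hq]
  rw [rpow_def_of_pos hq, rpow_def_of_pos (by linarith), ← exp_add, ← exp_add, ← exp_add,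
    exp_le_exp]
  nlinarith

theorem Gamma_le_one_of_one_le_of_le_two {p : ℝ} (h1 : 1 ≤ p) (h2 : p ≤ 2) : Gamma p ≤ 1 := by
  have h := convexOn_Gamma.2 (mem_Ioi.2 one_pos) (mem_Ioi.2 two_pos)
    (show 0 ≤ 2 - p by linarith) (show 0 ≤ p - 1 by linarith) (by ring)
  simp only [smul_eq_mul, Gamma_one, Gamma_two, mul_one] at h
  rwa [show 2 - p + (p - 1) * 2 = p by ring, show 2 - p + (p - 1) = 1 by ring] at h

theorem Gamma_le_exp_two_mul_rpow_sub_half_mul_exp_neg {p : ℝ} (hp : 1 ≤ p) :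
    Gamma p ≤ exp 2 * (p ^ (p - 1 / 2) * exp (-p)) := by
  obtain ⟨n, hn⟩ : ∃ n : ℕ, p ≤ n + 2 := by
    obtain ⟨n, hn⟩ := exists_nat_ge p
    exact ⟨n, by linarith⟩
  induction n generalizing p with
  | zero =>
    have hbase : exp (-2) ≤ p ^ (p - 1 / 2) * exp (-p) := by
      rw [← one_mul (exp (-2))]
      gcongr
      · exact one_le_rpow hp (by linarith)
      · push_cast at hn; linarith
    calc Gamma p ≤ 1 := Gamma_le_one_of_one_le_of_le_two hp (by simpa using hn)
      _ = exp 2 * exp (-2) := by rw [← exp_add]; simp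
      _ ≤ _ := by gcongr
  | succ n ih =>
    rcases le_or_gt p (n + 2) with h | h
    · exact ih hp h
    obtain ⟨q, rfl⟩ : ∃ q, p = q + 1 := ⟨p - 1, by ring⟩
    have hq : 0 < q := by linarith [(n.cast_nonneg : (0 : ℝ) ≤ n)]
    calc Gamma (q + 1) = q * Gamma q := Gamma_add_one hq.ne'
      _ ≤ q * (exp 2 * (q ^ (q - 1 / 2) * exp (-q))) := by
        gcongr
        exact ih (by linarith) (by push_cast at hn; linarith)
      _ = exp 2 * (q * (q ^ (q - 1 / 2) * exp (-q))) := by ring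
      _ ≤ _ := mul_le_mul_of_nonneg_left (mul_rpow_sub_half_mul_exp_neg_le hq) (exp_pos 2).le

theorem integrableOn_rpow_mul_exp_neg {s : ℝ} (hs : 0 < s) :
    IntegrableOn (fun u : ℝ => u ^ (s - 1) * exp (-u)) (Ioi 0) :=
  (GammaIntegral_convergent hs).congr_fun (fun _ _ => mul_comm _ _) measurableSet_Ioi

theorem integral_rpow_mul_exp_neg {s : ℝ} (hs : 0 < s) :
    ∫ u in Ioi (0 : ℝ), u ^ (s - 1) * exp (-u) = Gamma s := by
  rw [Gamma_eq_integral hs]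
  exact setIntegral_congr_fun measurableSet_Ioi fun _ _ => mul_comm _ _

theorem sub_sq_mul_rpow_mul_exp_neg_eqOn (p : ℝ) :
    EqOn (fun u : ℝ => (p - u) ^ 2 * (u ^ (p - 1) * exp (-u)))
      (fun u => p ^ 2 * (u ^ (p - 1) * exp (-u)) - 2 * p * (u ^ (p + 1 - 1) * exp (-u))
        + u ^ (p + 2 - 1) * exp (-u)) (Ioi 0) := by
  intro u (hu : 0 < u)
  have h1 : u ^ (p + 1 - 1) = u * u ^ (p - 1) := by
    rw [show p + 1 - 1 = 1 + (p - 1) by ring, rpow_add hu, rpow_one]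
  have h2 : u ^ (p + 2 - 1) = u ^ 2 * u ^ (p - 1) := by
    rw [show p + 2 - 1 = 2 + (p - 1) by ring, rpow_add hu, rpow_two]
  simp only [h1, h2]
  ring

theorem integrableOn_sub_sq_mul_rpow_mul_exp_neg {p : ℝ} (hp : 0 < p) :
    IntegrableOn (fun u : ℝ => (p - u) ^ 2 * (u ^ (p - 1) * exp (-u))) (Ioi 0) := by
  have h0 := integrableOn_rpow_mul_exp_neg hp
  have h1 := integrableOn_rpow_mul_exp_neg (show 0 < p + 1 by linarith)
  have h2 := integrableOn_rpow_mul_exp_neg (show 0 < p + 2 by linarith)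
  refine IntegrableOn.congr_fun ?_ (sub_sq_mul_rpow_mul_exp_neg_eqOn p).symm measurableSet_Ioi
  exact ((h0.const_mul _).sub (h1.const_mul _)).add h2

theorem integral_sub_sq_mul_rpow_mul_exp_neg {p : ℝ} (hp : 0 < p) :
    ∫ u in Ioi (0 : ℝ), (p - u) ^ 2 * (u ^ (p - 1) * exp (-u)) = p * Gamma p := by
  have h0 := integrableOn_rpow_mul_exp_neg hp
  have h1 := integrableOn_rpow_mul_exp_neg (show 0 < p + 1 by linarith)
  have h2 := integrableOn_rpow_mul_exp_neg (show 0 < p + 2 by linarith)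
  have h01 : IntegrableOn (fun u : ℝ => p ^ 2 * (u ^ (p - 1) * exp (-u))
      - 2 * p * (u ^ (p + 1 - 1) * exp (-u))) (Ioi 0) := (h0.const_mul _).sub (h1.const_mul _)
  rw [setIntegral_congr_fun measurableSet_Ioi (sub_sq_mul_rpow_mul_exp_neg_eqOn p),
    integral_add h01 h2,
    integral_sub (h0.const_mul _) (h1.const_mul _), integral_const_mul, integral_const_mul,
    integral_rpow_mul_exp_neg hp, integral_rpow_mul_exp_neg (by linarith),
    integral_rpow_mul_exp_neg (by linarith), show p + 2 = p + 1 + 1 by ring,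
    Gamma_add_one (show p + 1 ≠ 0 by linarith), Gamma_add_one hp.ne']
  ring

theorem continuous_sub_mul_rpow_mul_exp_neg {p : ℝ} (hp : 1 ≤ p) :
    Continuous fun u : ℝ => (p - u) * (u ^ (p - 1) * exp (-u)) :=
  (continuous_const.sub continuous_id).mul
    ((continuous_id.rpow_const fun _ => Or.inr (by linarith)).mul continuous_neg.rexp)

theorem integral_sub_mul_rpow_mul_exp_neg {p : ℝ} (hp : 1 ≤ p) :
    ∫ u in Ioo (0 : ℝ) p, (p - u) * (u ^ (p - 1) * exp (-u)) = p ^ p * exp (-p) := by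
  have hp0 : 0 < p := by linarith
  have hderiv : ∀ x ∈ uIcc 0 p, HasDerivAt (fun u : ℝ => u ^ p * exp (-u))
      ((p - x) * (x ^ (p - 1) * exp (-x))) x := by
    intro x hx
    rw [uIcc_of_le hp0.le] at hx
    have hxp : x ^ p = x * x ^ (p - 1) := by
      rcases hx.1.eq_or_lt with rfl | hx0
      · simp [zero_rpow hp0.ne']
      · rw [← rpow_one_add' hx0.le (by linarith), add_sub_cancel]
    refine ((hasDerivAt_rpow_const (Or.inr hp)).mul (hasDerivAt_neg x).exp).congr_deriv ?_
    rw [hxp]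
    ring
  rw [← integral_Ioc_eq_integral_Ioo, ← intervalIntegral.integral_of_le hp0.le,
    intervalIntegral.integral_eq_sub_of_hasDerivAt hderiv
      ((continuous_sub_mul_rpow_mul_exp_neg hp).intervalIntegrable _ _)]
  simp [zero_rpow hp0.ne']

theorem integral_Ioo_sub_sq_mul_rpow_mul_exp_neg_le {p : ℝ} (hp : 0 < p) :
    ∫ u in Ioo (0 : ℝ) p, (p - u) ^ 2 * (u ^ (p - 1) * exp (-u)) ≤ p * Gamma p := by
  rw [← integral_sub_sq_mul_rpow_mul_exp_neg hp]
  refine setIntegral_mono_set (integrableOn_sub_sq_mul_rpow_mul_exp_neg hp) ?_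
    Ioo_subset_Ioi_self.eventuallyLE
  refine (ae_restrict_iff' measurableSet_Ioi).2 (ae_of_all _ fun u (hu : 0 < u) => ?_)
  positivity

theorem exp_neg_two_mul_sqrt_mul_Gamma_le {p : ℝ} (hp : 1 ≤ p) :
    exp (-2) * √p * Gamma p ≤ p ^ p * exp (-p) := by
  have hsplit : p ^ p = p ^ (p - 1 / 2) * √p := by
    rw [sqrt_eq_rpow, ← rpow_add (by linarith)]
    norm_num
  calc exp (-2) * √p * Gamma p
      ≤ exp (-2) * √p * (exp 2 * (p ^ (p - 1 / 2) * exp (-p))) := by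
        gcongr; exact Gamma_le_exp_two_mul_rpow_sub_half_mul_exp_neg hp
    _ = p ^ p * exp (-p) := by
        rw [hsplit, exp_neg]; field_simp

theorem exp_neg_four_mul_Gamma_le_integral {p : ℝ} (hp : 1 ≤ p) :
    exp (-4) * Gamma p ≤ ∫ u in Ioo (0 : ℝ) p, u ^ (p - 1) * exp (-u) := by
  have hp0 : 0 < p := by linarith
  set γ := ∫ u in Ioo (0 : ℝ) p, u ^ (p - 1) * exp (-u)
  set c := exp 2 * √p / 2 with hc
  have hw : IntegrableOn (fun u : ℝ => u ^ (p - 1) * exp (-u)) (Ioo 0 p) :=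
    (integrableOn_rpow_mul_exp_neg hp0).mono_set Ioo_subset_Ioi_self
  have hw2 : IntegrableOn (fun u : ℝ => (p - u) ^ 2 * (u ^ (p - 1) * exp (-u))) (Ioo 0 p) :=
    (integrableOn_sub_sq_mul_rpow_mul_exp_neg hp0).mono_set Ioo_subset_Ioi_self
  have hw1 : IntegrableOn (fun u : ℝ => (p - u) * (u ^ (p - 1) * exp (-u))) (Ioo 0 p) :=
    (continuous_sub_mul_rpow_mul_exp_neg hp).integrableOn_Icc.mono_set Ioo_subset_Icc_self
  have hamgm := integral_mul_le_amgm (by positivity : 0 < c)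
    ((ae_restrict_iff' measurableSet_Ioo).2 (ae_of_all _ fun u hu => by
      have : 0 < u := hu.1; positivity)) hw hw1 hw2
  rw [integral_sub_mul_rpow_mul_exp_neg hp] at hamgm
  have hs : 0 < √p := sqrt_pos.2 hp0
  have hsq : √p ^ 2 = p := sq_sqrt hp0.le
  have key : exp (-2) * √p * Gamma p ≤ c * γ + (4 * c)⁻¹ * (p * Gamma p) := by
    calc _ ≤ _ := exp_neg_two_mul_sqrt_mul_Gamma_le hp
      _ ≤ _ := hamgm
      _ ≤ _ := by gcongr; exact integral_Ioo_sub_sq_mul_rpow_mul_exp_neg_le hp0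
  -- `c` is chosen so that the second-moment term is half of the left-hand side of `key`.
  have hvar : (4 * c)⁻¹ * (p * Gamma p) = exp (-2) * √p * Gamma p / 2 := by
    rw [hc, exp_neg]
    field_simp
    rw [hsq]
    ring
  have hmean : exp (-2) * Gamma p ≤ exp 2 * γ := by
    rw [hvar, hc] at key
    have : √p * (exp (-2) * Gamma p) ≤ √p * (exp 2 * γ) := by linarith
    exact le_of_mul_le_mul_left this hs
  calc exp (-4) * Gamma p = exp (-2) * (exp (-2) * Gamma p) := by
        rw [← mul_assoc, ← exp_add]; norm_num
    _ ≤ exp (-2) * (exp 2 * γ) := by gcongr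
    _ = γ := by rw [← mul_assoc, ← exp_add]; simp

theorem rpow_self_mul_exp_neg_le_mul_integral {p : ℝ} (hp : 0 < p) :
    p ^ p * exp (-p) ≤ p * ∫ u in Ioo (0 : ℝ) p, u ^ (p - 1) * exp (-u) := by
  have hrpow : IntegrableOn (fun u : ℝ => u ^ (p - 1)) (Ioo 0 p) :=
    (intervalIntegrable_iff_integrableOn_Ioo_of_le hp.le).1
      (intervalIntegral.intervalIntegrable_rpow' (by linarith))
  have hval : p * ∫ u in Ioo (0 : ℝ) p, u ^ (p - 1) * exp (-p) = p ^ p * exp (-p) := by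
    rw [integral_mul_const, ← integral_Ioc_eq_integral_Ioo,
      ← intervalIntegral.integral_of_le hp.le, integral_rpow (Or.inl (by linarith)),
      sub_add_cancel, zero_rpow hp.ne', sub_zero]
    field_simp
  rw [← hval]
  refine mul_le_mul_of_nonneg_left ?_ hp.le
  refine setIntegral_mono_on (hrpow.mul_const _)
    ((integrableOn_rpow_mul_exp_neg hp).mono_set Ioo_subset_Ioi_self) measurableSet_Ioo
    fun u hu => ?_
  have : 0 < u := hu.1
  gcongr
  exact hu.2.le

theorem exp_neg_one_le_rpow_self_mul_exp_neg {p : ℝ} (hp : 0 < p) :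
    exp (-1) ≤ p ^ p * exp (-p) := by
  rw [rpow_def_of_pos hp, ← exp_add, exp_le_exp]
  nlinarith [self_sub_one_le_mul_log hp.le]

end Real

noncomputable def regularizedLowerGamma (s x : ℝ) : ℝ :=
  (1 / Real.Gamma s) * ∫ u in Ioo (0 : ℝ) x, u ^ (s - 1) * Real.exp (-u)

open Real in
theorem exp_neg_four_le_regularizedLowerGamma_self {p : ℝ} (hp : 0 < p) :
    exp (-4) ≤ regularizedLowerGamma p p := by
  have hG := Gamma_pos_of_pos hp
  have hγ : 0 ≤ ∫ u in Ioo (0 : ℝ) p, u ^ (p - 1) * exp (-u) :=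
    setIntegral_nonneg measurableSet_Ioo fun u hu => by have : 0 < u := hu.1; positivity
  rw [regularizedLowerGamma, one_div_mul_eq_div, le_div_iff₀ hG]
  rcases le_total p 1 with hp1 | hp1
  · have hpG : p * Gamma p ≤ 1 := by
      rw [← Gamma_add_one hp.ne']
      exact Gamma_le_one_of_one_le_of_le_two (by linarith) (by linarith)
    calc exp (-4) * Gamma p ≤ exp (-1) * Gamma p := by gcongr; norm_num
      _ ≤ (p * ∫ u in Ioo (0 : ℝ) p, u ^ (p - 1) * exp (-u)) * Gamma p := by
        gcongr
        exact (exp_neg_one_le_rpow_self_mul_exp_neg hp).trans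
          (rpow_self_mul_exp_neg_le_mul_integral hp)
      _ = (∫ u in Ioo (0 : ℝ) p, u ^ (p - 1) * exp (-u)) * (p * Gamma p) := by ring
      _ ≤ ∫ u in Ioo (0 : ℝ) p, u ^ (p - 1) * exp (-u) := mul_le_of_le_one_right hγ hpG
  · exact exp_neg_four_mul_Gamma_le_integral hp1

theorem regularizedLowerGamma_one_one : regularizedLowerGamma 1 1 = 1 - Real.exp (-1) := by
  simp only [regularizedLowerGamma, Real.Gamma_one, sub_self, Real.rpow_zero, one_mul, div_one]
  rw [← integral_Ioc_eq_integral_Ioo, ← intervalIntegral.integral_of_le zero_le_one,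
    intervalIntegral.integral_comp_neg fun x => Real.exp x, integral_exp]
  norm_num

/-- The infimum over p>0 of P{Gamma(p,1) ≤ p} = (1/Γ(p)) ∫₀^p u^{p-1}e^{-u} du is
strictly between 0 and 1. -/
theorem gamma_prob_inf_pos_lt_one :
    0 < sInf ((fun p : ℝ =>
        (1 / Real.Gamma p) * ∫ u in Ioo (0:ℝ) p, u ^ (p - 1) * Real.exp (-u)) '' Ioi 0) ∧
    sInf ((fun p : ℝ =>
        (1 / Real.Gamma p) * ∫ u in Ioo (0:ℝ) p, u ^ (p - 1) * Real.exp (-u)) '' Ioi 0) < 1 := by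
  change 0 < sInf ((fun p => regularizedLowerGamma p p) '' Ioi 0) ∧
    sInf ((fun p => regularizedLowerGamma p p) '' Ioi 0) < 1
  set S := (fun p => regularizedLowerGamma p p) '' Ioi 0
  have hmem : 1 - Real.exp (-1) ∈ S := ⟨1, mem_Ioi.2 one_pos, regularizedLowerGamma_one_one⟩
  have hlb : ∀ y ∈ S, Real.exp (-4) ≤ y := by
    rintro _ ⟨p, hp, rfl⟩
    exact exp_neg_four_le_regularizedLowerGamma_self hp
  constructor
  · exact (Real.exp_pos _).trans_le (le_csInf ⟨_, hmem⟩ hlb)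
  · exact (csInf_le ⟨_, hlb⟩ hmem).trans_lt (by linarith [Real.exp_pos (-1)])
end

section
/- Let κ_j > 0 for j = 2,3,4 satisfy κ₃² < κ₂κ₄, and let p ≥ -1 satisfy (p+4)/(p+3) < κ₂κ₄/κ₃². Define s = κ₄/((p+4)κ₃) and m = κ₃/(Γ(p+4) s^{p+4}), and let γ_j = Γ(j+p+1) m s^{j+p+1} for j ≥ 2. Then γ₃ = κ₃, γ₄ = κ₄, and γ₂ = (p+4)κ₃²/((p+3)κ₄) < κ₂. -/
/-! By `Γ(a+1) = a Γ(a)` the weights satisfy `γ_{j+1} = (j+p+1) s γ_j`. Since `m` forces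
`γ₃ = κ₃`, this gives `γ₄ = (p+4) s κ₃ = κ₄` and `γ₂ = κ₃ / ((p+3) s)`; the bound `γ₂ < κ₂` is
the hypothesis on `(p+4)/(p+3)` with denominators cleared. -/

open Real

lemma Real.Gamma_mul_rpow_add_one {a s : ℝ} (ha : a ≠ 0) (hs : 0 < s) :
    Gamma (a + 1) * s ^ (a + 1) = a * s * (Gamma a * s ^ a) := by
  rw [Gamma_add_one ha, rpow_add_one hs.ne']
  ring

lemma gammaWeight_add_one {p s m : ℝ} {γ : ℝ → ℝ}
    (hγ : ∀ j : ℝ, γ j = Gamma (j + p + 1) * m * s ^ (j + p + 1)) (hs : 0 < s) {j : ℝ}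
    (hj : j + p + 1 ≠ 0) : γ (j + 1) = (j + p + 1) * s * γ j := by
  rw [hγ, hγ, show j + 1 + p + 1 = (j + p + 1) + 1 by ring]
  linear_combination m * Gamma_mul_rpow_add_one hj hs

theorem fourth_order_cumulant_matching_general
    (κ₂ κ₃ κ₄ p : ℝ) (h3 : 0 < κ₃) (h4 : 0 < κ₄)
    (hp : -1 ≤ p) (hpq : (p + 4) / (p + 3) < κ₂ * κ₄ / κ₃ ^ 2)
    (s m : ℝ) (hs : s = κ₄ / ((p + 4) * κ₃))
    (hm : m = κ₃ / (Real.Gamma (p + 4) * s ^ (p + 4)))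
    (γ : ℝ → ℝ) (hγ : ∀ j : ℝ, γ j = Real.Gamma (j + p + 1) * m * s ^ (j + p + 1)) :
    γ 3 = κ₃ ∧ γ 4 = κ₄ ∧ γ 2 = (p + 4) * κ₃ ^ 2 / ((p + 3) * κ₄) ∧ γ 2 < κ₂ := by
  have hp3 : 0 < p + 3 := by linarith
  have hp4 : 0 < p + 4 := by linarith
  have hs_pos : 0 < s := by rw [hs]; positivity
  have g3 : γ 3 = κ₃ := by
    have : 0 < Gamma (p + 4) * s ^ (p + 4) :=
      mul_pos (Gamma_pos_of_pos hp4) (rpow_pos_of_pos hs_pos _)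
    rw [hγ, show (3 : ℝ) + p + 1 = p + 4 by ring, hm]
    field_simp
  have g4 : γ 4 = κ₄ := by
    rw [show (4 : ℝ) = 3 + 1 by norm_num, gammaWeight_add_one hγ hs_pos (by linarith), g3, hs,
      show (3 : ℝ) + p + 1 = p + 4 by ring]
    field_simp
  have g2 : γ 2 = (p + 4) * κ₃ ^ 2 / ((p + 3) * κ₄) := by
    have hγ3 := gammaWeight_add_one hγ hs_pos (j := 2) (by linarith)
    rw [show (2 : ℝ) + 1 = 3 by norm_num, g3, show (2 : ℝ) + p + 1 = p + 3 by ring, hs] at hγ3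
    field_simp at hγ3 ⊢
    linear_combination -hγ3
  refine ⟨g3, g4, g2, ?_⟩
  rw [g2, div_lt_iff₀ (by positivity)]
  rw [div_lt_div_iff₀ hp3 (by positivity)] at hpq
  linarith

/-- Fourth-order cumulant matching: with s = κ₄/((p+4)κ₃), m = κ₃/(Γ(p+4) s^{p+4}) and
γ_j = Γ(j+p+1) m s^{j+p+1}, one has γ₃ = κ₃, γ₄ = κ₄ and
γ₂ = (p+4)κ₃²/((p+3)κ₄) < κ₂. -/
theorem fourth_order_cumulant_matching
    (κ₂ κ₃ κ₄ p : ℝ) (h2 : 0 < κ₂) (h3 : 0 < κ₃) (h4 : 0 < κ₄)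
    (hCS : κ₃ ^ 2 < κ₂ * κ₄)
    (hp : -1 ≤ p) (hpq : (p + 4) / (p + 3) < κ₂ * κ₄ / κ₃ ^ 2)
    (s m : ℝ) (hs : s = κ₄ / ((p + 4) * κ₃))
    (hm : m = κ₃ / (Real.Gamma (p + 4) * s ^ (p + 4)))
    (γ : ℝ → ℝ) (hγ : ∀ j : ℝ, γ j = Real.Gamma (j + p + 1) * m * s ^ (j + p + 1)) :
    γ 3 = κ₃ ∧ γ 4 = κ₄ ∧ γ 2 = (p + 4) * κ₃ ^ 2 / ((p + 3) * κ₄) ∧ γ 2 < κ₂ :=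
  fourth_order_cumulant_matching_general κ₂ κ₃ κ₄ p h3 h4 hp hpq s m hs hm γ hγ
end

section
/- Let ξ be an infinitely divisible real random variable with characteristic exponent Ψ(t) = ∫ (1 + itu - e^{itu}) ν(du), where ν is a measure with finite moments of all orders ≥ 2 and ∫u²dν < ∞. Let Z ~ N(0, ε²) with ε > 0 be independent of ξ. Then the characteristic function of ξ + Z is a Schwartz function on ℝ. -/
/-!
Write `φ = exp ∘ g` with `g(t) = -Ψ(t) - ε²t²/2`. Differentiating under the integral, the
`n`-th derivative of `Ψ` is the integral of the `n`-th `t`-derivative of `1 + itu - e^{itu}`,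
which is bounded by `2 (1 + |t|)² (u² + |u|^{n+2})`; so `Ψ`, hence `g`, has temperate growth.
By Faà di Bruno, every derivative of `exp ∘ g` is then a polynomial times `|exp (g t)|`, and
`|exp (g t)| ≤ e^{-ε²t²/2}` because `Re Ψ(t) = ∫ (1 - cos tu) dν ≥ 0`.
-/

open MeasureTheory Complex
open scoped SchwartzMap

theorem Complex.norm_iteratedFDeriv_real_exp (n : ℕ) (z : ℂ) :
    ‖iteratedFDeriv ℝ n cexp z‖ = ‖cexp z‖ := by
  rw [← (contDiff_exp (𝕜 := ℂ) (n := n)).contDiffAt.restrictScalars_iteratedFDeriv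
      (𝕜 := ℝ), Function.comp_apply, ContinuousMultilinearMap.norm_restrictScalars,
    norm_iteratedFDeriv_eq_norm_iteratedDeriv]
  simpa using congrArg norm (congrFun (iteratedDeriv_cexp_const_mul n 1) z)

theorem Real.one_add_pow_mul_exp_neg_mul_sq_le {c : ℝ} (hc : 0 < c) (N : ℕ) {r : ℝ}
    (hr : 0 ≤ r) :
    (1 + r) ^ N * Real.exp (-(c * r ^ 2)) ≤ (2 / c) ^ N * N.factorial * Real.exp c := by
  have h_base :
      (1 + r) ^ N ≤ (2 / c) ^ N * N.factorial * ((c * (1 + r ^ 2)) ^ N / N.factorial) := by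
    calc (1 + r) ^ N ≤ (2 / c * (c * (1 + r ^ 2))) ^ N := by
          refine pow_le_pow_left₀ (by positivity) ?_ N
          rw [← mul_assoc, div_mul_cancel₀ _ hc.ne']
          nlinarith [sq_nonneg (r - 1)]
      _ = _ := by rw [mul_pow]; field_simp
  have h_exp : (c * (1 + r ^ 2)) ^ N / N.factorial ≤ Real.exp (c * (1 + r ^ 2)) :=
    Real.pow_div_factorial_le_exp _ (by positivity) N
  calc (1 + r) ^ N * Real.exp (-(c * r ^ 2))
      ≤ (2 / c) ^ N * N.factorial * Real.exp (c * (1 + r ^ 2)) * Real.exp (-(c * r ^ 2)) := by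
        gcongr; exact h_base.trans (by gcongr)
    _ = (2 / c) ^ N * N.factorial * Real.exp c := by
        rw [mul_assoc, ← Real.exp_add]; ring_nf

section

variable {E : Type*} [NormedAddCommGroup E] [NormedSpace ℝ E]

theorem Function.HasTemperateGrowth.norm_iteratedFDeriv_cexp_le {g : E → ℂ}
    (hg : g.HasTemperateGrowth) (n : ℕ) :
    ∃ (k : ℕ) (C : ℝ), 0 ≤ C ∧ ∀ x,
      ‖iteratedFDeriv ℝ n (fun x ↦ cexp (g x)) x‖ ≤
        C * (1 + ‖x‖) ^ k * ‖cexp (g x)‖ := by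
  obtain ⟨k, C, -, hbound⟩ := hg.norm_iteratedFDeriv_le_uniform n
  refine ⟨k * n, n.factorial * max C 1 ^ n, by positivity, fun x ↦ ?_⟩
  have hD : ∀ i, 1 ≤ i → i ≤ n →
      ‖iteratedFDeriv ℝ i g x‖ ≤ (max C 1 * (1 + ‖x‖) ^ k) ^ i := fun i hi hin ↦
    calc ‖iteratedFDeriv ℝ i g x‖ ≤ C * (1 + ‖x‖) ^ k := hbound i hin x
      _ ≤ max C 1 * (1 + ‖x‖) ^ k := by gcongr; exact le_max_left C 1
      _ ≤ (max C 1 * (1 + ‖x‖) ^ k) ^ i :=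
        le_self_pow₀ (one_le_mul_of_one_le_of_one_le (le_max_right C 1)
          (one_le_pow₀ (by simp))) (by omega)
  calc ‖iteratedFDeriv ℝ n (cexp ∘ g) x‖
      ≤ n.factorial * ‖cexp (g x)‖ * (max C 1 * (1 + ‖x‖) ^ k) ^ n :=
        norm_iteratedFDeriv_comp_le (contDiff_exp (𝕜 := ℝ)) hg.1
          (by exact_mod_cast le_top) x (fun i _ ↦ (norm_iteratedFDeriv_real_exp i (g x)).le) hD
    _ = n.factorial * max C 1 ^ n * (1 + ‖x‖) ^ (k * n) * ‖cexp (g x)‖ := by ring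

theorem Function.HasTemperateGrowth.exists_schwartzMap_cexp {g : E → ℂ}
    (hg : g.HasTemperateGrowth) {c : ℝ} (hc : 0 < c)
    (hre : ∀ x, (g x).re ≤ -(c * ‖x‖ ^ 2)) :
    ∃ φ : 𝓢(E, ℂ), ∀ x, φ x = cexp (g x) := by
  refine ⟨⟨fun x ↦ cexp (g x), (contDiff_exp (𝕜 := ℝ)).comp hg.1, fun k n ↦ ?_⟩,
    fun _ ↦ rfl⟩
  obtain ⟨m, C, hC, hderiv⟩ := hg.norm_iteratedFDeriv_cexp_le n
  refine ⟨C * ((2 / c) ^ (k + m) * (k + m).factorial * Real.exp c), fun x ↦ ?_⟩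
  have hgauss : ‖cexp (g x)‖ ≤ Real.exp (-(c * ‖x‖ ^ 2)) := by
    rw [norm_exp]; exact Real.exp_le_exp.2 (hre x)
  calc ‖x‖ ^ k * ‖iteratedFDeriv ℝ n (fun x ↦ cexp (g x)) x‖
      ≤ (1 + ‖x‖) ^ k * (C * (1 + ‖x‖) ^ m * Real.exp (-(c * ‖x‖ ^ 2))) := by
        gcongr
        · linarith
        · exact (hderiv x).trans (by gcongr)
    _ = C * ((1 + ‖x‖) ^ (k + m) * Real.exp (-(c * ‖x‖ ^ 2))) := by ring
    _ ≤ C * ((2 / c) ^ (k + m) * (k + m).factorial * Real.exp c) :=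
        mul_le_mul_of_nonneg_left
          (Real.one_add_pow_mul_exp_neg_mul_sq_le hc _ (norm_nonneg x)) hC

end

theorem Real.norm_exp_I_mul_ofReal_sub_one_sub_le (x : ℝ) :
    ‖cexp (I * x) - 1 - I * x‖ ≤ 2 * x ^ 2 := by
  have hIx : ‖I * (x : ℂ)‖ = |x| := by simp
  rcases le_or_gt |x| 1 with hx | hx
  · calc ‖cexp (I * x) - 1 - I * x‖ ≤ ‖I * (x : ℂ)‖ ^ 2 :=
          Complex.norm_exp_sub_one_sub_id_le (hIx.trans_le hx)
      _ ≤ 2 * x ^ 2 := by rw [hIx, sq_abs]; nlinarith [sq_nonneg x]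
  · calc ‖cexp (I * x) - 1 - I * x‖ ≤ ‖cexp (I * x) - 1‖ + ‖I * (x : ℂ)‖ :=
          norm_sub_le _ _
      _ ≤ |x| + |x| := by rw [hIx]; gcongr; exact Real.norm_exp_I_mul_ofReal_sub_one_le
      _ ≤ 2 * x ^ 2 := by nlinarith [sq_abs x]

theorem pow_le_sq_add_pow {R : Type*} [Semiring R] [LinearOrder R] [IsStrictOrderedRing R]
    {a : R} (ha : 0 ≤ a) {n : ℕ} (hn : 2 ≤ n) : a ^ n ≤ a ^ 2 + a ^ (n + 2) := by
  rcases le_total a 1 with h | h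
  · exact le_add_of_le_of_nonneg (pow_le_pow_of_le_one ha h hn) (pow_nonneg ha _)
  · exact le_add_of_nonneg_of_le (pow_nonneg ha 2) (pow_le_pow_right₀ h (Nat.le_add_right n 2))

/-- `levyIntegrand n t u = ∂ⁿ/∂tⁿ (1 + itu - e^{itu})`. Keeping the compensating terms for
`n = 0, 1` makes it `O(u²)` as `u → 0`, so only moments of order `≥ 2` are needed. -/
noncomputable def levyIntegrand : ℕ → ℝ → ℝ → ℂ
  | 0, t, u => 1 + I * t * u - cexp (I * t * u)
  | 1, t, u => I * u * (1 - cexp (I * t * u))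
  | n + 2, t, u => -(I * u) ^ (n + 2) * cexp (I * t * u)

theorem hasDerivAt_levyIntegrand (n : ℕ) (t u : ℝ) :
    HasDerivAt (fun t ↦ levyIntegrand n t u) (levyIntegrand (n + 1) t u) t := by
  have hlin : HasDerivAt (fun t : ℝ ↦ I * t * u) (I * u) t := by
    simpa using ((hasDerivAt_id t).ofReal_comp.const_mul I).mul_const (u : ℂ)
  have hexp := hlin.cexp
  rcases n with _ | _ | n
  · exact ((hlin.const_add 1).fun_sub hexp).congr_deriv (by simp only [levyIntegrand]; ring)
  · exact (((hasDerivAt_const t 1).fun_sub hexp).const_mul (I * u)).congr_deriv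
      (by simp only [levyIntegrand]; ring)
  · exact (hexp.const_mul (-(I * u) ^ (n + 2))).congr_deriv (by simp only [levyIntegrand]; ring)

theorem continuous_levyIntegrand (n : ℕ) (t : ℝ) : Continuous (levyIntegrand n t) := by
  rcases n with _ | _ | n <;> unfold levyIntegrand <;> fun_prop

theorem norm_levyIntegrand_le (n : ℕ) (t u : ℝ) :
    ‖levyIntegrand n t u‖ ≤ 2 * (1 + |t|) ^ 2 * (|u| ^ 2 + |u| ^ (n + 2)) := by
  have htu : I * t * u = I * ((t * u : ℝ) : ℂ) := by push_cast; ring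
  have ht : |t| ≤ (1 + |t|) ^ 2 := by nlinarith [abs_nonneg t]
  have ht' : 1 ≤ (1 + |t|) ^ 2 := by nlinarith [abs_nonneg t]
  have hu : 0 ≤ |u| ^ 2 := by positivity
  have hun : 0 ≤ |u| ^ (n + 2) := by positivity
  suffices ‖levyIntegrand n t u‖ ≤ 2 * (1 + |t|) ^ 2 * |u| ^ 2 ∨
      ‖levyIntegrand n t u‖ ≤ |u| ^ 2 + |u| ^ (n + 2) by
    rcases this with h | h <;> nlinarith
  rcases n with _ | _ | n
  · left
    calc ‖levyIntegrand 0 t u‖ = ‖cexp (I * (t * u : ℝ)) - 1 - I * (t * u : ℝ)‖ := by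
          rw [← norm_neg]; simp only [levyIntegrand, htu]; ring_nf
      _ ≤ 2 * (t * u) ^ 2 := Real.norm_exp_I_mul_ofReal_sub_one_sub_le _
      _ ≤ 2 * (1 + |t|) ^ 2 * |u| ^ 2 := by
          rw [mul_pow, ← sq_abs t, ← sq_abs u]; nlinarith [abs_nonneg t]
  · left
    calc ‖levyIntegrand 1 t u‖ = |u| * ‖cexp (I * (t * u : ℝ)) - 1‖ := by
          simp [levyIntegrand, htu, norm_sub_rev]
      _ ≤ |u| * |t * u| := by gcongr; exact Real.norm_exp_I_mul_ofReal_sub_one_le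
      _ ≤ 2 * (1 + |t|) ^ 2 * |u| ^ 2 := by rw [abs_mul]; nlinarith
  · right
    calc ‖levyIntegrand (n + 2) t u‖ = |u| ^ (n + 2) := by
          simp [levyIntegrand, norm_exp]
      _ ≤ |u| ^ 2 + |u| ^ (n + 2 + 2) := pow_le_sq_add_pow (abs_nonneg u) (by omega)

noncomputable def levyExponentDeriv (ν : Measure ℝ) (n : ℕ) (t : ℝ) : ℂ :=
  ∫ u, levyIntegrand n t u ∂ν

section

variable {ν : Measure ℝ}
  (hmom : ∀ j : ℕ, 2 ≤ j → Integrable (fun u : ℝ ↦ |u| ^ j) ν)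
include hmom

theorem integrable_levyIntegrand (n : ℕ) (t : ℝ) : Integrable (levyIntegrand n t) ν :=
  (((hmom 2 le_rfl).add (hmom (n + 2) (by omega))).const_mul _).mono'
    (continuous_levyIntegrand n t).aestronglyMeasurable
    (.of_forall (norm_levyIntegrand_le n t))

theorem hasDerivAt_levyExponentDeriv (n : ℕ) (t₀ : ℝ) :
    HasDerivAt (levyExponentDeriv ν n) (levyExponentDeriv ν (n + 1) t₀) t₀ := by
  have hball : ∀ t ∈ Metric.ball t₀ 1, 1 + |t| ≤ 2 + |t₀| := fun t ht ↦ by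
    have := abs_sub_abs_le_abs_sub t t₀
    rw [Metric.mem_ball, Real.dist_eq] at ht
    linarith
  refine (hasDerivAt_integral_of_dominated_loc_of_deriv_le (Metric.ball_mem_nhds t₀ one_pos)
    (.of_forall fun t ↦ (continuous_levyIntegrand n t).aestronglyMeasurable)
    (integrable_levyIntegrand hmom n t₀)
    (continuous_levyIntegrand (n + 1) t₀).aestronglyMeasurable
    (bound := fun u ↦ 2 * (2 + |t₀|) ^ 2 * (|u| ^ 2 + |u| ^ (n + 3))) ?_
    (((hmom 2 le_rfl).add (hmom (n + 3) (by omega))).const_mul _)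
    (.of_forall fun u t _ ↦ hasDerivAt_levyIntegrand n t u)).2
  refine .of_forall fun u t ht ↦ (norm_levyIntegrand_le (n + 1) t u).trans ?_
  have := pow_le_pow_left₀ (by positivity) (hball t ht) 2
  exact mul_le_mul_of_nonneg_right (by linarith) (by positivity)

theorem iteratedDeriv_levyExponentDeriv_zero (n : ℕ) :
    iteratedDeriv n (levyExponentDeriv ν 0) = levyExponentDeriv ν n := by
  induction n with
  | zero => exact iteratedDeriv_zero
  | succ n ih =>
    rw [iteratedDeriv_succ, ih]
    exact funext fun t ↦ (hasDerivAt_levyExponentDeriv hmom n t).deriv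

theorem norm_levyExponentDeriv_le (n : ℕ) (t : ℝ) :
    ‖levyExponentDeriv ν n t‖ ≤
      2 * (1 + |t|) ^ 2 * ∫ u, |u| ^ 2 + |u| ^ (n + 2) ∂ν := by
  rw [← integral_const_mul]
  exact norm_integral_le_of_norm_le
    (((hmom 2 le_rfl).add (hmom (n + 2) (by omega))).const_mul _)
    (.of_forall (norm_levyIntegrand_le n t))

theorem hasTemperateGrowth_levyExponent : (levyExponentDeriv ν 0).HasTemperateGrowth := by
  refine ⟨contDiff_of_differentiable_iteratedDeriv fun n _ ↦ ?_, fun n ↦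
    ⟨2, 2 * ∫ u, |u| ^ 2 + |u| ^ (n + 2) ∂ν, fun t ↦ ?_⟩⟩
  · rw [iteratedDeriv_levyExponentDeriv_zero hmom]
    exact fun t ↦ (hasDerivAt_levyExponentDeriv hmom n t).differentiableAt
  · rw [norm_iteratedFDeriv_eq_norm_iteratedDeriv, iteratedDeriv_levyExponentDeriv_zero hmom,
      Real.norm_eq_abs]
    exact (norm_levyExponentDeriv_le hmom n t).trans_eq (by ring)

theorem re_levyExponent_nonneg (t : ℝ) : 0 ≤ (levyExponentDeriv ν 0 t).re := by
  rw [levyExponentDeriv, ← RCLike.re_to_complex,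
    ← integral_re (integrable_levyIntegrand hmom 0 t)]
  refine integral_nonneg fun u ↦ ?_
  have h_norm : ‖cexp (I * t * u)‖ = 1 := by simp [norm_exp]
  simpa [levyIntegrand] using (re_le_norm _).trans h_norm.le

end

/-- Let ξ be infinitely divisible with characteristic exponent
Ψ(t) = ∫ (1 + itu - e^{itu}) ν(du), where ν has finite moments of all orders ≥ 2,
and let Z ~ N(0,ε²) be independent of ξ.  Then the characteristic function of ξ + Z,
namely t ↦ exp(-Ψ(t) - ε²t²/2), is a Schwartz function. -/
theorem char_fun_convolved_gaussian_schwartz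
    (ν : Measure ℝ) (hmom : ∀ j : ℕ, 2 ≤ j → Integrable (fun u : ℝ => |u| ^ j) ν)
    (ε : ℝ) (hε : 0 < ε)
    (Ψ : ℝ → ℂ)
    (hΨ : ∀ t : ℝ, Ψ t =
      ∫ u : ℝ, (1 + Complex.I * t * u - Complex.exp (Complex.I * t * u)) ∂ν) :
    ∃ φ : SchwartzMap ℝ ℂ,
      ∀ t : ℝ, φ t = Complex.exp (-(Ψ t) - (ε : ℂ) ^ 2 * (t : ℂ) ^ 2 / 2) := by
  obtain rfl : Ψ = levyExponentDeriv ν 0 := funext hΨ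
  have hΨ_growth := hasTemperateGrowth_levyExponent hmom
  have hg : Function.HasTemperateGrowth
      fun t : ℝ ↦ -levyExponentDeriv ν 0 t - (ε : ℂ) ^ 2 / 2 * (t : ℂ) ^ 2 := by
    fun_prop
  obtain ⟨φ, hφ⟩ := hg.exists_schwartzMap_cexp (c := ε ^ 2 / 2) (by positivity) fun t ↦ by
    have hΨ_re := re_levyExponent_nonneg hmom t
    have h_gauss_re : ((ε : ℂ) ^ 2 / 2 * (t : ℂ) ^ 2).re = ε ^ 2 / 2 * ‖t‖ ^ 2 := by
      rw [Real.norm_eq_abs, sq_abs]; norm_cast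
    rw [sub_re, neg_re, h_gauss_re]
    linarith
  exact ⟨φ, fun t ↦ by rw [hφ]; ring_nf⟩
end
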